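/- arXiv:2412.08481 — 2 statements merged into one kernel-verified Lean document; each statement's English description precedes it below -/
import Mathlib

section
/- Let Φ_R be 4-periodic with gliding symmetry Φ_R(x+2) = 1 - Φ_R(x). Then the relaxed cut C_R(ξ) = (1/2)∑_{i,j} A_{ij} Φ_R(ξ_i - ξ_j) with ξ_i = σ_i + X_i + 4k_i (σ_i ∈ {-1,1}, X_i ∈ ℝ, k_i ∈ ℤ) decomposes as C_R(ξ) = C(σ) + (1/2)∑_{i,j} A_{ij} σ_i σ_j Φ_R(X_i - X_j), where C(σ) = (1/4)∑_{i,j} A_{ij}(1 - σ_i σ_j). -/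
theorem relaxed_cut_decomposition (N : ℕ) (A : Matrix (Fin N) (Fin N) ℝ)
    (hA : A.IsSymm) (hdiag : ∀ i, A i i = 0)
    (Φ : ℝ → ℝ) (hper : ∀ x, Φ (x + 4) = Φ x) (hglide : ∀ x, Φ (x + 2) = 1 - Φ x)
    (σ : Fin N → ℝ) (hσ : ∀ i, σ i = -1 ∨ σ i = 1)
    (X : Fin N → ℝ) (k : Fin N → ℤ) (ξ : Fin N → ℝ)
    (hξ : ∀ i, ξ i = σ i + X i + 4 * (k i : ℝ)) :
    (1/2) * ∑ i, ∑ j, A i j * Φ (ξ i - ξ j) =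
      (1/4) * ∑ i, ∑ j, A i j * (1 - σ i * σ j) +
      (1/2) * ∑ i, ∑ j, A i j * (σ i * σ j) * Φ (X i - X j) := by
  have P : Function.Periodic Φ 4 := hper
  have key : ∀ i j, A i j * Φ (ξ i - ξ j) =
      (1/2) * (A i j * (1 - σ i * σ j)) + A i j * (σ i * σ j) * Φ (X i - X j) := by
    intro i j
    have h1 : ξ i - ξ j = (σ i - σ j + (X i - X j)) + ((k i - k j : ℤ) : ℝ) * 4 := by
      rw [hξ i, hξ j]; push_cast; ring
    have h2 : Φ (ξ i - ξ j) = Φ (σ i - σ j + (X i - X j)) := by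
      rw [h1]; exact (P.int_mul (k i - k j)) _
    rcases hσ i with hi | hi <;> rcases hσ j with hj | hj <;> rw [h2, hi, hj]
    · rw [show (-1 : ℝ) - -1 + (X i - X j) = X i - X j by ring]; ring
    · rw [show (-1 : ℝ) - 1 + (X i - X j) = (X i - X j - 4) + 2 by ring, hglide, P.sub_eq]
      ring
    · rw [show (1 : ℝ) - -1 + (X i - X j) = (X i - X j) + 2 by ring, hglide]; ring
    · rw [show (1 : ℝ) - 1 + (X i - X j) = X i - X j by ring]; ring
  calc (1/2) * ∑ i, ∑ j, A i j * Φ (ξ i - ξ j)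
      = (1/2) * ∑ i, ∑ j, ((1/2) * (A i j * (1 - σ i * σ j)) +
          A i j * (σ i * σ j) * Φ (X i - X j)) := by
        congr 1; exact Finset.sum_congr rfl fun i _ =>
          Finset.sum_congr rfl fun j _ => key i j
    _ = (1/4) * ∑ i, ∑ j, A i j * (1 - σ i * σ j) +
        (1/2) * ∑ i, ∑ j, A i j * (σ i * σ j) * Φ (X i - X j) := by
        simp only [Finset.sum_add_distrib, Finset.mul_sum, mul_add]
        congr 1 <;> exact Finset.sum_congr rfl fun i _ =>
          Finset.sum_congr rfl fun j _ => by ring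
end

section
/- For the R×R matrix M with M_{pq} = sign(p - q), if R is even then M is invertible (kernel is trivial). -/
open Finset Matrix

/-!
With prefix sums `P k = Q 0 + ⋯ + Q (k - 1)`, the identity
`sign (p - q) = [q < p] + [q ≤ p] - 1` turns row `p` of `M Q = 0` into `P p + P (p + 1) = P R`.
Starting from `P 0 = 0`, the prefix sums therefore alternate between `0` and `P R`; since `R` is
even this forces `P R = 0`, so every prefix sum vanishes, and hence so does `Q`.
-/

theorem eq_zero_of_add_succ_eq_of_even {G : Type*} [AddCommGroup G] {P : ℕ → G} {n : ℕ}
    (hn : Even n) (h0 : P 0 = 0) (hstep : ∀ k < n, P k + P (k + 1) = P n) :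
    ∀ k ≤ n, P k = 0 := by
  have alternate : ∀ k ≤ n, P k = if Even k then 0 else P n := by
    intro k
    induction k with
    | zero => simp [h0]
    | succ k ih =>
      intro hk
      rw [eq_sub_of_add_eq' (hstep k hk), ih (Nat.le_of_succ_le hk)]
      by_cases hk' : Even k <;> simp [hk', Nat.even_add_one]
  have hPn : P n = 0 := by simpa [hn] using alternate n le_rfl
  intro k hk
  rw [alternate k hk, hPn, ite_self]

theorem Int.sign_natCast_sub_natCast {α : Type*} [Ring α] (p q : ℕ) :
    (Int.sign ((p : ℤ) - q) : α) =
      (if q < p then 1 else 0) + (if q < p + 1 then 1 else 0) - 1 := by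
  rcases lt_trichotomy q p with h | rfl | h
  · simp [h, Int.sign_eq_one_of_pos (by omega : (0 : ℤ) < p - q), Nat.lt_succ_of_lt h]
  · simp
  · simp [h.not_gt, Int.sign_eq_neg_one_of_neg (by omega : (p : ℤ) - q < 0),
      show ¬ q < p + 1 by omega]

section
variable {α : Type*} [Ring α] {R : ℕ}

def signMatrix (R : ℕ) : Matrix (Fin R) (Fin R) α :=
  Matrix.of fun p q => Int.sign ((p : ℤ) - q)

def prefixSum (Q : Fin R → α) (k : ℕ) : α := ∑ q : Fin R with q.val < k, Q q

theorem prefixSum_zero (Q : Fin R → α) : prefixSum Q 0 = 0 := by simp [prefixSum]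

theorem prefixSum_self (Q : Fin R → α) : prefixSum Q R = ∑ q, Q q := by simp [prefixSum]

theorem prefixSum_succ_sub (Q : Fin R → α) (p : Fin R) :
    prefixSum Q (p + 1) - prefixSum Q p = Q p := by
  simp only [prefixSum, sum_filter, ← sum_sub_distrib]
  rw [Fintype.sum_eq_single p fun q hq => ?_]
  · simp
  · have : (q : ℕ) ≠ p := Fin.val_ne_of_ne hq
    split_ifs <;> first | omega | simp

theorem signMatrix_mulVec_apply (Q : Fin R → α) (p : Fin R) :
    (signMatrix R *ᵥ Q) p = prefixSum Q p + prefixSum Q (p + 1) - prefixSum Q R := by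
  rw [mulVec, dotProduct, prefixSum_self, prefixSum, prefixSum, sum_filter, sum_filter,
    ← sum_add_distrib, ← sum_sub_distrib]
  refine sum_congr rfl fun q _ => ?_
  simp only [signMatrix, of_apply, Int.sign_natCast_sub_natCast]
  split_ifs <;> simp

theorem signMatrix_mulVec_eq_zero_of_even (hR : Even R) {Q : Fin R → α}
    (hQ : signMatrix R *ᵥ Q = 0) : Q = 0 := by
  have hprefix : ∀ k ≤ R, prefixSum Q k = 0 :=
    eq_zero_of_add_succ_eq_of_even hR (prefixSum_zero Q) fun k hk => by
      simpa [signMatrix_mulVec_apply, sub_eq_zero] using congrFun hQ ⟨k, hk⟩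
  funext p
  rw [Pi.zero_apply, ← prefixSum_succ_sub Q p, hprefix _ p.isLt, hprefix _ p.is_le', sub_zero]
end

theorem sign_matrix_even_invertible_general (R : ℕ) (hEven : Even R)
    (M : Matrix (Fin R) (Fin R) ℝ)
    (hM : ∀ p q : Fin R, M p q = Int.sign ((p : ℤ) - (q : ℤ))) :
    ∀ Q : Fin R → ℝ, M.mulVec Q = 0 → Q = 0 := by
  obtain rfl : M = signMatrix R := Matrix.ext hM
  exact fun Q => signMatrix_mulVec_eq_zero_of_even hEven

theorem sign_matrix_even_invertible (R : ℕ) (hR : 0 < R) (hEven : Even R)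
    (M : Matrix (Fin R) (Fin R) ℝ)
    (hM : ∀ p q : Fin R, M p q = Int.sign ((p : ℤ) - (q : ℤ))) :
    ∀ Q : Fin R → ℝ, M.mulVec Q = 0 → Q = 0 :=
  sign_matrix_even_invertible_general R hEven M hM
end
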